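/- Let U ⊆ ℂ be open, let P, χ : U → ℂ be holomorphic with P nowhere vanishing on U, and let u : U → ℝ be a twice continuously differentiable function satisfying Δu = 4·(e^{2u} − e^{−2u}·|P|²) on U. Define Ṗ = χ·P' + 2·χ'·P, define u_z = (1/2)·(∂u/∂x − i·∂u/∂y), define F = χ' + 2·χ·u_z, and define the complex-valued function g = (e^{−2u} − |P|^{−1})·(2·|P|²·χ'·conj(χ) + |χ|²·P'·conj(P)) on U. Then the following identity holds at every point of U: ∂/∂x (2·Re g) − ∂/∂y (2·Im g) = 4·e^{−2u}·(|Ṗ|² − Re(F·P·conj(Ṗ))) − 2·|Ṗ|²/|P|. (Equivalently: the 2-form δ = [4e^{−2u}(|Ṗ|² − Re(F P conj(Ṗ))) − 2|Ṗ|²/|P|] dx∧dy is the exterior derivative of the 1-form β = 2·Im(g)·dx + 2·Re(g)·dy.) -/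

import Mathlib

/-- Directional derivative of `f : ℂ → E` at `z` in the direction `v ∈ ℂ`. -/
noncomputable def dirDeriv {E : Type*} [NormedAddCommGroup E] [NormedSpace ℝ E]
    (v : ℂ) (f : ℂ → E) (z : ℂ) : E :=
  deriv (fun t : ℝ => f (z + t • v)) 0

/-- The flat Laplacian `Δf = ∂²f/∂x² + ∂²f/∂y²` of a function on `ℂ ≅ ℝ²`
(applied componentwise when the target is `ℂ`). -/
noncomputable def flatLaplacian {E : Type*} [NormedAddCommGroup E] [NormedSpace ℝ E]
    (f : ℂ → E) (z : ℂ) : E :=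
  dirDeriv 1 (dirDeriv 1 f) z + dirDeriv Complex.I (dirDeriv Complex.I f) z

/-- The Wirtinger derivative `u_z = ½(∂u/∂x − i ∂u/∂y)` of a real-valued
function on `ℂ`. -/
noncomputable def wirtingerDeriv (u : ℂ → ℝ) (z : ℂ) : ℂ :=
  (((dirDeriv 1 u z : ℝ) : ℂ) - Complex.I * ((dirDeriv Complex.I u z : ℝ) : ℂ)) / 2

/-- `Ṗ = χ P' + 2 χ' P`. -/
noncomputable def lieDerivCoeff (P χ : ℂ → ℂ) (z : ℂ) : ℂ :=
  χ z * deriv P z + 2 * deriv χ z * P z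

/-- `F = χ' + 2 χ u_z`. -/
noncomputable def holoVariation (χ : ℂ → ℂ) (u : ℂ → ℝ) (z : ℂ) : ℂ :=
  deriv χ z + 2 * χ z * wirtingerDeriv u z

/-- `g = (e^{−2u} − |P|⁻¹)(2|P|² χ' conj(χ) + |χ|² P' conj(P))`. -/
noncomputable def exactnessPotential (P χ : ℂ → ℂ) (u : ℂ → ℝ) (z : ℂ) : ℂ :=
  ((Real.exp (-(2 * u z)) - (‖P z‖)⁻¹ : ℝ) : ℂ) *
    (2 * ((‖P z‖ : ℂ)) ^ 2 * deriv χ z * (starRingEnd ℂ) (χ z)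
      + ((‖χ z‖ : ℂ)) ^ 2 * deriv P z * (starRingEnd ℂ) (P z))


/-!
Write `∂̄ = ∂ₓ + i ∂_y` (twice the Wirtinger derivative `∂/∂z̄`). The left-hand side is
`2 Re (∂ₓ g + i ∂_y g) = 2 Re (∂̄ g)`, and `∂̄` obeys the Leibniz rule, kills holomorphic
functions and sends `conj f` to `2 conj f'`. The real factor `e^{-2u} - |P|⁻¹` is handled by the
chain rule, with `∂̄ u = 2 conj u_z` and `|P|² = P conj P`. This expresses `∂̄ g` pointwise in
`P, P', χ, χ', u_z, e^{-2u}`, and the claim becomes an algebraic identity, which holds after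
substituting `conj P = |P|² / P`.
-/
open Complex ComplexConjugate

theorem HasFDerivAt.dirDeriv_eq {E : Type*} [NormedAddCommGroup E] [NormedSpace ℝ E]
    {f : ℂ → E} {L : ℂ →L[ℝ] E} {z : ℂ} (hf : HasFDerivAt f L z) (v : ℂ) :
    dirDeriv v f z = L v := by
  have hline : HasDerivAt (fun t : ℝ => z + t • v) v 0 := by
    simpa using ((hasDerivAt_id (0 : ℝ)).smul_const v).const_add z
  exact (hf.comp_hasDerivAt_of_eq 0 hline (by simp)).deriv

/-- `dbar L = L 1 + i L i` is `2 ∂/∂z̄` of a function whose real derivative is `L`. -/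
noncomputable def dbar (L : ℂ →L[ℝ] ℂ) : ℂ := L 1 + I * L I

def HasDbarAt (f : ℂ → ℂ) (a z : ℂ) : Prop := ∃ L, HasFDerivAt f L z ∧ dbar L = a

namespace HasDbarAt

variable {f g : ℂ → ℂ} {a b z : ℂ}

theorem const (c : ℂ) : HasDbarAt (fun _ => c) 0 z :=
  ⟨0, hasFDerivAt_const c z, by simp [dbar]⟩

theorem add (hf : HasDbarAt f a z) (hg : HasDbarAt g b z) :
    HasDbarAt (fun w => f w + g w) (a + b) z := by
  obtain ⟨L, hL, rfl⟩ := hf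
  obtain ⟨M, hM, rfl⟩ := hg
  exact ⟨L + M, hL.add hM, by simp only [dbar, add_apply]; ring⟩

theorem sub (hf : HasDbarAt f a z) (hg : HasDbarAt g b z) :
    HasDbarAt (fun w => f w - g w) (a - b) z := by
  obtain ⟨L, hL, rfl⟩ := hf
  obtain ⟨M, hM, rfl⟩ := hg
  exact ⟨L - M, hL.sub hM, by simp only [dbar, sub_apply]; ring⟩

theorem mul (hf : HasDbarAt f a z) (hg : HasDbarAt g b z) :
    HasDbarAt (fun w => f w * g w) (f z * b + g z * a) z := by
  obtain ⟨L, hL, rfl⟩ := hf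
  obtain ⟨M, hM, rfl⟩ := hg
  exact ⟨_, hL.mul hM, by simp only [dbar, add_apply, smul_apply, smul_eq_mul]; ring⟩

theorem const_mul (hf : HasDbarAt f a z) (c : ℂ) : HasDbarAt (fun w => c * f w) (c * a) z := by
  simpa using (const c).mul hf

theorem ofReal_comp {h : ℂ → ℝ} {φ : ℝ → ℝ} {φ' : ℝ}
    (hh : HasDbarAt (fun w => (h w : ℂ)) a z) (hφ : HasDerivAt φ φ' (h z)) :
    HasDbarAt (fun w => (φ (h w) : ℂ)) (φ' * a) z := by
  obtain ⟨L, hL, rfl⟩ := hh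
  -- `im ∘ (h : ℂ)` vanishes identically, so `L` takes real values
  have him : imCLM.comp L = 0 :=
    (imCLM.hasFDerivAt.comp z hL).unique
      (by simpa [Function.comp_def] using hasFDerivAt_const (0 : ℝ) z)
  have hre : HasFDerivAt h (reCLM.comp L) z := by
    simpa [Function.comp_def] using reCLM.hasFDerivAt.comp z hL
  refine ⟨_, ofRealCLM.hasFDerivAt.comp z (hφ.comp_hasFDerivAt z hre), ?_⟩
  have h1 : (L 1).im = 0 := by simpa using congrArg (· 1) him
  have hI : (L I).im = 0 := by simpa using congrArg (· I) him
  apply Complex.ext <;> simp [dbar, h1, hI]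

end HasDbarAt

theorem HasDbarAt.dirDeriv_re_sub_dirDeriv_im {g : ℂ → ℂ} {a z : ℂ} (hg : HasDbarAt g a z) :
    dirDeriv 1 (fun w => 2 * (g w).re) z - dirDeriv I (fun w => 2 * (g w).im) z = 2 * a.re := by
  obtain ⟨L, hL, rfl⟩ := hg
  have hre := (reCLM.hasFDerivAt.comp z hL).const_mul (2 : ℝ)
  have him := (imCLM.hasFDerivAt.comp z hL).const_mul (2 : ℝ)
  simp only [Function.comp_def, reCLM_apply, imCLM_apply] at hre him
  rw [hre.dirDeriv_eq, him.dirDeriv_eq]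
  simp [dbar]
  ring

theorem DifferentiableAt.hasDbarAt_zero {f : ℂ → ℂ} {z : ℂ} (hf : DifferentiableAt ℂ f z) :
    HasDbarAt f 0 z :=
  ⟨_, hf.hasDerivAt.hasFDerivAt.restrictScalars ℝ, by
    simp [dbar]; linear_combination deriv f z * I_sq⟩

theorem DifferentiableAt.hasDbarAt_conj {f : ℂ → ℂ} {z : ℂ} (hf : DifferentiableAt ℂ f z) :
    HasDbarAt (fun w => conj (f w)) (2 * conj (deriv f z)) z :=
  ⟨_, (hf.hasDerivAt.hasFDerivAt.restrictScalars ℝ).star, by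
    simp [dbar]; linear_combination -conj (deriv f z) * I_sq⟩

theorem HasFDerivAt.hasDbarAt_ofReal {u : ℂ → ℝ} {du : ℂ →L[ℝ] ℝ} {z : ℂ}
    (hu : HasFDerivAt u du z) :
    HasDbarAt (fun w => (u w : ℂ)) (2 * conj (wirtingerDeriv u z)) z := by
  refine ⟨ofRealCLM.comp du, ofRealCLM.hasFDerivAt.comp z hu, ?_⟩
  simp [dbar, wirtingerDeriv, hu.dirDeriv_eq, map_ofNat]
  ring

theorem HasFDerivAt.hasDbarAt_exp_neg_two_mul {u : ℂ → ℝ} {du : ℂ →L[ℝ] ℝ} {z : ℂ}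
    (hu : HasFDerivAt u du z) :
    HasDbarAt (fun w => (Real.exp (-(2 * u w)) : ℂ))
      (-4 * Real.exp (-(2 * u z)) * conj (wirtingerDeriv u z)) z := by
  have hφ : HasDerivAt (fun s => Real.exp (-(2 * s))) (Real.exp (-(2 * u z)) * -(2 * 1)) (u z) :=
    ((hasDerivAt_id _).const_mul 2).neg.exp
  convert hu.hasDbarAt_ofReal.ofReal_comp hφ using 1
  push_cast
  ring

theorem DifferentiableAt.hasDbarAt_norm_inv {f : ℂ → ℂ} {z : ℂ} (hf : DifferentiableAt ℂ f z)
    (hz : f z ≠ 0) :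
    HasDbarAt (fun w => ((‖f w‖⁻¹ : ℝ) : ℂ)) (-(f z * conj (deriv f z)) / ‖f z‖ ^ 3) z := by
  have hsq : HasDbarAt (fun w => ((‖f w‖ ^ 2 : ℝ) : ℂ)) (f z * (2 * conj (deriv f z))) z := by
    simpa [mul_conj'] using hf.hasDbarAt_zero.mul hf.hasDbarAt_conj
  have hr : 0 < ‖f z‖ ^ 2 := by positivity
  have hφ := (Real.hasDerivAt_sqrt hr.ne').inv (Real.sqrt_pos.mpr hr).ne'
  rw [Real.sqrt_sq (norm_nonneg _)] at hφ
  convert hsq.ofReal_comp hφ using 1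
  · simp [Real.sqrt_sq (norm_nonneg _)]
  · have : ‖f z‖ ≠ 0 := norm_ne_zero_iff.mpr hz
    push_cast
    field_simp

/-- The value of `dbar` on `exactnessPotential P χ u` at a point where `P, P', χ, χ', u_z, e^{-2u}`
take the values `p, p', c, c', w, e`. -/
noncomputable def dbarExactnessPotential (p p' c c' w : ℂ) (e : ℝ) : ℂ :=
  ((e - ‖p‖⁻¹ : ℝ) : ℂ) * (2 * (2 * p * conj p' * c' * conj c + 2 * ‖p‖ ^ 2 * c' * conj c'
      + c * conj c' * p' * conj p + ‖c‖ ^ 2 * p' * conj p'))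
    + (-4 * e * conj w + p * conj p' / ‖p‖ ^ 3)
      * (2 * ‖p‖ ^ 2 * c' * conj c + ‖c‖ ^ 2 * p' * conj p)

theorem two_mul_re_dbarExactnessPotential {p : ℂ} (hp : p ≠ 0) (p' c c' w : ℂ) (e : ℝ) :
    2 * (dbarExactnessPotential p p' c c' w e).re
      = 4 * e * (‖c * p' + 2 * c' * p‖ ^ 2
          - ((c' + 2 * c * w) * p * conj (c * p' + 2 * c' * p)).re)
        - 2 * ‖c * p' + 2 * c' * p‖ ^ 2 / ‖p‖ := by
  have hr : (‖p‖ : ℂ) ≠ 0 := by simpa using hp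
  -- after eliminating `conj p` the identity is one between rational functions
  have hconj : conj p = (‖p‖ : ℂ) ^ 2 / p := by rw [← mul_conj']; field_simp
  apply Complex.ofReal_injective
  simp only [dbarExactnessPotential, ofReal_mul, ofReal_sub, ofReal_div, ofReal_pow, ofReal_ofNat,
    ofReal_inv, re_eq_add_conj]
  rw [← mul_conj' c, ← mul_conj' (c * p' + 2 * c' * p)]
  simp only [map_add, map_mul, map_sub, map_div₀, map_inv₀, map_neg, map_pow, map_ofNat,
    conj_conj, conj_ofReal, hconj]
  field_simp
  ring

theorem exactnessPotential_eq_mul_conj (P χ : ℂ → ℂ) (u : ℂ → ℝ) :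
    exactnessPotential P χ u = fun w => ((Real.exp (-(2 * u w)) - ‖P w‖⁻¹ : ℝ) : ℂ) *
      (2 * (P w * conj (P w)) * deriv χ w * conj (χ w)
        + χ w * conj (χ w) * deriv P w * conj (P w)) := by
  ext w
  simp only [exactnessPotential, mul_conj']

theorem hasDbarAt_exactnessPotential {P χ : ℂ → ℂ} {u : ℂ → ℝ} {du : ℂ →L[ℝ] ℝ} {z : ℂ}
    (hP : DifferentiableAt ℂ P z) (hP' : DifferentiableAt ℂ (deriv P) z)
    (hχ : DifferentiableAt ℂ χ z) (hχ' : DifferentiableAt ℂ (deriv χ) z)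
    (hu : HasFDerivAt u du z) (hPz : P z ≠ 0) :
    HasDbarAt (exactnessPotential P χ u)
      (dbarExactnessPotential (P z) (deriv P z) (χ z) (deriv χ z) (wirtingerDeriv u z)
        (Real.exp (-(2 * u z)))) z := by
  have hfactor : HasDbarAt (fun w => ((Real.exp (-(2 * u w)) - ‖P w‖⁻¹ : ℝ) : ℂ))
      (-4 * Real.exp (-(2 * u z)) * conj (wirtingerDeriv u z)
        + P z * conj (deriv P z) / ‖P z‖ ^ 3) z := by
    simpa only [ofReal_sub, neg_div, sub_neg_eq_add] using
      hu.hasDbarAt_exp_neg_two_mul.sub (hP.hasDbarAt_norm_inv hPz)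
  have hbracket :=
    ((((hP.hasDbarAt_zero.mul hP.hasDbarAt_conj).const_mul 2).mul hχ'.hasDbarAt_zero).mul
      hχ.hasDbarAt_conj).add
    (((hχ.hasDbarAt_zero.mul hχ.hasDbarAt_conj).mul hP'.hasDbarAt_zero).mul hP.hasDbarAt_conj)
  rw [exactnessPotential_eq_mul_conj]
  convert hfactor.mul hbracket using 1
  simp only [dbarExactnessPotential, mul_conj']
  ring

theorem statement10_general (U : Set ℂ) (hU : IsOpen U)
    (P χ : ℂ → ℂ) (hP : DifferentiableOn ℂ P U) (hχ : DifferentiableOn ℂ χ U)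
    (hP0 : ∀ z ∈ U, P z ≠ 0)
    (u : ℂ → ℝ) (hu : ContDiffOn ℝ 2 u U) :
    ∀ z ∈ U,
      dirDeriv 1 (fun w => 2 * (exactnessPotential P χ u w).re) z
        - dirDeriv Complex.I (fun w => 2 * (exactnessPotential P χ u w).im) z
      = 4 * Real.exp (-(2 * u z)) *
          ((‖lieDerivCoeff P χ z‖) ^ 2
            - (holoVariation χ u z * P z * (starRingEnd ℂ) (lieDerivCoeff P χ z)).re)
        - 2 * (‖lieDerivCoeff P χ z‖) ^ 2 / ‖P z‖ := by
  intro z hz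
  have hPa := hP.analyticOnNhd hU
  have hχa := hχ.analyticOnNhd hU
  have hud : DifferentiableAt ℝ u z :=
    (hu.contDiffAt (hU.mem_nhds hz)).differentiableAt (by norm_num)
  rw [(hasDbarAt_exactnessPotential (hPa z hz).differentiableAt (hPa.deriv z hz).differentiableAt
    (hχa z hz).differentiableAt (hχa.deriv z hz).differentiableAt hud.hasFDerivAt
    (hP0 z hz)).dirDeriv_re_sub_dirDeriv_im, two_mul_re_dbarExactnessPotential (hP0 z hz)]
  rfl

/-- Lemma 8.1, exactness: with `P`, `χ` holomorphic, `P ≠ 0`, and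
`Δu = 4(e^{2u} − e^{−2u}|P|²)` on `U`, the density
`4e^{−2u}(|Ṗ|² − Re(F P conj Ṗ)) − 2|Ṗ|²/|P|` equals
`∂ₓ(2 Re g) − ∂_y(2 Im g)`, i.e. `δ = dβ` for `β = 2 Im(g) dx + 2 Re(g) dy`. -/
theorem statement10 (U : Set ℂ) (hU : IsOpen U)
    (P χ : ℂ → ℂ) (hP : DifferentiableOn ℂ P U) (hχ : DifferentiableOn ℂ χ U)
    (hP0 : ∀ z ∈ U, P z ≠ 0)
    (u : ℂ → ℝ) (hu : ContDiffOn ℝ 2 u U)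
    (hu_eq : ∀ z ∈ U, flatLaplacian u z
      = 4 * (Real.exp (2 * u z) - Real.exp (-(2 * u z)) * (‖P z‖) ^ 2)) :
    ∀ z ∈ U,
      dirDeriv 1 (fun w => 2 * (exactnessPotential P χ u w).re) z
        - dirDeriv Complex.I (fun w => 2 * (exactnessPotential P χ u w).im) z
      = 4 * Real.exp (-(2 * u z)) *
          ((‖lieDerivCoeff P χ z‖) ^ 2
            - (holoVariation χ u z * P z * (starRingEnd ℂ) (lieDerivCoeff P χ z)).re)
        - 2 * (‖lieDerivCoeff P χ z‖) ^ 2 / ‖P z‖ :=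
  statement10_general U hU P χ hP hχ hP0 u hu
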